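/- Let s ∈ [−1,1]^n with s ≠ 0, let 0 < ε < 1/2, and let q ∈ ℝ^n satisfy ‖q − (I + L)^{−1} s‖_{I+L} ≤ δ·‖(I + L)^{−1} s‖_{I+L} for some δ with 0 < δ ≤ ε/(3·√(2n)). Then (1 − ε)·‖(I + L)^{−1} s‖₂² ≤ ‖q‖₂² ≤ (1 + ε)·‖(I + L)^{−1} s‖₂². -/

import Mathlib

/-!
Write `M = I + L` and `x = M⁻¹ s`. For a symmetric `A` one has `|yᵀ A y| ≤ Σᵢ dᵢ yᵢ²`
(from `2|yᵢ yⱼ| ≤ yᵢ² + yⱼ²`), so `0 ≤ yᵀ L y ≤ 2 Σᵢ dᵢ yᵢ²`; since the degrees of a signed graph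
without loops are at most `n - 1`, this gives `‖y‖₂² ≤ ‖y‖_M² ≤ 2n ‖y‖₂²`. Hence the `M`-norm error
bound turns into `‖q - x‖₂ ≤ δ √(2n) ‖x‖₂ ≤ (ε/3) ‖x‖₂`, and the triangle inequality puts `‖q‖₂`
within a factor `1 ± ε/3` of `‖x‖₂`, whose square lies in `[1 - ε, 1 + ε]`.
-/

open Matrix

/-- The norm of a vector `x` with respect to a matrix `K`: `‖x‖_K = √(xᵀ K x)`. -/
noncomputable def matNorm {m : Type*} [Fintype m] (K : Matrix m m ℝ) (x : m → ℝ) : ℝ :=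
  Real.sqrt (x ⬝ᵥ K *ᵥ x)

section SignedLaplacian

variable {ι : Type*} [Fintype ι]

noncomputable def signedLaplacian [DecidableEq ι] (A : Matrix ι ι ℝ) : Matrix ι ι ℝ :=
  diagonal (fun i => ∑ j, |A i j|) - A

lemma dotProduct_diagonal_mulVec_self [DecidableEq ι] (d x : ι → ℝ) :
    x ⬝ᵥ diagonal d *ᵥ x = ∑ i, d i * x i ^ 2 := by
  simp only [dotProduct, mulVec_diagonal]
  exact Finset.sum_congr rfl fun i _ => by ring

lemma abs_dotProduct_mulVec_self_le {A : Matrix ι ι ℝ} (hA : A.IsSymm) (x : ι → ℝ) :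
    |x ⬝ᵥ A *ᵥ x| ≤ ∑ i, (∑ j, |A i j|) * x i ^ 2 := by
  have hswap : ∑ i, ∑ j, |A i j| * x j ^ 2 = ∑ i, ∑ j, |A i j| * x i ^ 2 := by
    rw [Finset.sum_comm]
    simp only [hA.apply]
  calc |x ⬝ᵥ A *ᵥ x| = |∑ i, ∑ j, A i j * (x i * x j)| := by
        simp only [dotProduct, mulVec, Finset.mul_sum]
        congr 1
        exact Finset.sum_congr rfl fun i _ => Finset.sum_congr rfl fun j _ => by ring
    _ ≤ ∑ i, ∑ j, |A i j| * ((x i ^ 2 + x j ^ 2) / 2) := by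
        refine (Finset.abs_sum_le_sum_abs _ _).trans (Finset.sum_le_sum fun i _ => ?_)
        refine (Finset.abs_sum_le_sum_abs _ _).trans (Finset.sum_le_sum fun j _ => ?_)
        rw [abs_mul, abs_mul]
        gcongr
        nlinarith [abs_mul_abs_self (x i), abs_mul_abs_self (x j),
          sq_nonneg (|x i| - |x j|)]
    _ = ∑ i, (∑ j, |A i j|) * x i ^ 2 := by
        simp only [mul_add, add_div, Finset.sum_add_distrib, mul_div_assoc', hswap,
          Finset.sum_mul, ← Finset.sum_div]
        ring

lemma dotProduct_signedLaplacian_mulVec_self_mem_Icc [DecidableEq ι] {A : Matrix ι ι ℝ}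
    (hA : A.IsSymm) {Δ : ℝ} (hΔ : ∀ i, ∑ j, |A i j| ≤ Δ) (x : ι → ℝ) :
    x ⬝ᵥ signedLaplacian A *ᵥ x ∈ Set.Icc 0 (2 * Δ * ∑ i, x i ^ 2) := by
  have hquad := abs_le.mp (abs_dotProduct_mulVec_self_le hA x)
  have hdeg : ∑ i, (∑ j, |A i j|) * x i ^ 2 ≤ Δ * ∑ i, x i ^ 2 := by
    rw [Finset.mul_sum]
    exact Finset.sum_le_sum fun i _ => by gcongr; exact hΔ i
  rw [signedLaplacian, sub_mulVec, dotProduct_sub, dotProduct_diagonal_mulVec_self]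
  constructor <;> linarith

lemma dotProduct_one_add_signedLaplacian_mulVec_self_mem_Icc [DecidableEq ι] {A : Matrix ι ι ℝ}
    (hA : A.IsSymm) {Δ : ℝ} (hΔ : ∀ i, ∑ j, |A i j| ≤ Δ) (x : ι → ℝ) :
    x ⬝ᵥ (1 + signedLaplacian A) *ᵥ x ∈ Set.Icc (∑ i, x i ^ 2) ((1 + 2 * Δ) * ∑ i, x i ^ 2) := by
  have hL := dotProduct_signedLaplacian_mulVec_self_mem_Icc hA hΔ x
  have hx : x ⬝ᵥ x = ∑ i, x i ^ 2 := by simp only [dotProduct, sq]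
  rw [add_mulVec, one_mulVec, dotProduct_add, hx]
  constructor <;> linarith [hL.1, hL.2]

lemma sum_abs_le_card_sub_one {A : Matrix ι ι ℝ} (hdiag : ∀ i, A i i = 0)
    (hA : ∀ i j, |A i j| ≤ 1) (i : ι) : ∑ j, |A i j| ≤ Fintype.card ι - 1 := by
  classical
  rw [← Finset.add_sum_erase _ _ (Finset.mem_univ i), hdiag, abs_zero, zero_add]
  calc ∑ j ∈ Finset.univ.erase i, |A i j| ≤ ∑ _j ∈ Finset.univ.erase i, (1 : ℝ) :=
        Finset.sum_le_sum fun j _ => hA i j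
    _ = Fintype.card ι - 1 := by
        rw [Finset.sum_const, Finset.card_erase_of_mem (Finset.mem_univ i), nsmul_one,
          Finset.card_univ, Nat.cast_pred (Fintype.card_pos_iff.mpr ⟨i⟩)]

end SignedLaplacian

lemma sum_sq_sub_le_of_matNorm_sub_le {ι : Type*} [Fintype ι] {K : Matrix ι ι ℝ} {c δ : ℝ}
    (hlow : ∀ y, ∑ i, y i ^ 2 ≤ y ⬝ᵥ K *ᵥ y) (hup : ∀ y, y ⬝ᵥ K *ᵥ y ≤ c * ∑ i, y i ^ 2)
    {q x : ι → ℝ} (h : matNorm K (q - x) ≤ δ * matNorm K x) :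
    ∑ i, (q - x) i ^ 2 ≤ δ ^ 2 * c * ∑ i, x i ^ 2 := by
  have hK : ∀ y, 0 ≤ y ⬝ᵥ K *ᵥ y := fun y => (by positivity : (0 : ℝ) ≤ _).trans (hlow y)
  have hsq := pow_le_pow_left₀ (Real.sqrt_nonneg _) h 2
  unfold matNorm at hsq
  rw [mul_pow, Real.sq_sqrt (hK _), Real.sq_sqrt (hK _)] at hsq
  calc ∑ i, (q - x) i ^ 2 ≤ δ ^ 2 * (x ⬝ᵥ K *ᵥ x) := (hlow _).trans hsq
    _ ≤ δ ^ 2 * c * ∑ i, x i ^ 2 := by rw [mul_assoc]; gcongr; exact hup x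

lemma sq_norm_mem_Icc_of_sq_norm_sub_le {E : Type*} [SeminormedAddCommGroup E] {q x : E}
    {t : ℝ} (ht₀ : 0 ≤ t) (ht₁ : t ≤ 1) (h : ‖q - x‖ ^ 2 ≤ t ^ 2 * ‖x‖ ^ 2) :
    ‖q‖ ^ 2 ∈ Set.Icc ((1 - 3 * t) * ‖x‖ ^ 2) ((1 + 3 * t) * ‖x‖ ^ 2) := by
  have hdist : ‖q - x‖ ≤ t * ‖x‖ := by
    rw [← mul_pow] at h
    exact (pow_le_pow_iff_left₀ (norm_nonneg _) (by positivity) two_ne_zero).mp h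
  have hnorm := abs_le.mp ((abs_norm_sub_norm_le q x).trans hdist)
  have hx := norm_nonneg x
  have htt : t * t ≤ t := mul_le_of_le_one_left ht₀ ht₁
  constructor
  · have hlow : (1 - t) * ‖x‖ ≤ ‖q‖ := by linarith
    nlinarith [mul_le_mul hlow hlow (by nlinarith) (norm_nonneg q)]
  · have hup : ‖q‖ ≤ (1 + t) * ‖x‖ := by linarith
    nlinarith [mul_le_mul hup hup (norm_nonneg q) (by nlinarith)]

lemma sum_sq_mem_Icc_of_sum_sq_sub_le {ι : Type*} [Fintype ι] {q x : ι → ℝ} {t : ℝ}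
    (ht₀ : 0 ≤ t) (ht₁ : t ≤ 1) (h : ∑ i, (q - x) i ^ 2 ≤ t ^ 2 * ∑ i, x i ^ 2) :
    ∑ i, q i ^ 2 ∈ Set.Icc ((1 - 3 * t) * ∑ i, x i ^ 2) ((1 + 3 * t) * ∑ i, x i ^ 2) := by
  have hnorm (y : ι → ℝ) : ∑ i, y i ^ 2 = ‖WithLp.toLp 2 y‖ ^ 2 :=
    (EuclideanSpace.real_norm_sq_eq _).symm
  simp only [hnorm, WithLp.toLp_sub] at h ⊢
  exact sq_norm_mem_Icc_of_sq_norm_sub_le ht₀ ht₁ h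

theorem stmt_13_general (n : ℕ) (A : Matrix (Fin n) (Fin n) ℝ)
    (hAsymm : A.IsSymm) (hAdiag : ∀ i, A i i = 0)
    (hAval : ∀ i j, A i j = -1 ∨ A i j = 0 ∨ A i j = 1)
    (D L : Matrix (Fin n) (Fin n) ℝ)
    (hD : D = Matrix.diagonal fun i => ∑ j, |A i j|)
    (hL : L = D - A)
    (s : Fin n → ℝ)
    (ε : ℝ) (hε : 0 < ε) (hε' : ε < 1 / 2)
    (δ : ℝ) (hδ : 0 < δ) (hδ' : δ ≤ ε / (3 * Real.sqrt (2 * n)))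
    (q : Fin n → ℝ)
    (hq : matNorm (1 + L) (q - (1 + L)⁻¹ *ᵥ s) ≤
      δ * matNorm (1 + L) ((1 + L)⁻¹ *ᵥ s)) :
    (1 - ε) * ∑ i, (((1 + L)⁻¹ *ᵥ s) i) ^ 2 ≤ ∑ i, q i ^ 2 ∧
    ∑ i, q i ^ 2 ≤ (1 + ε) * ∑ i, (((1 + L)⁻¹ *ᵥ s) i) ^ 2 := by
  obtain rfl : L = signedLaplacian A := by rw [hL, hD]; rfl
  set x := (1 + signedLaplacian A)⁻¹ *ᵥ s
  have hdeg (i : Fin n) : ∑ j, |A i j| ≤ (n : ℝ) - 1 := by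
    simpa using sum_abs_le_card_sub_one hAdiag
      (fun i j => by rcases hAval i j with h | h | h <;> simp [h]) i
  have hM (y : Fin n → ℝ) :=
    dotProduct_one_add_signedLaplacian_mulVec_self_mem_Icc hAsymm hdeg y
  have hδ_sq : δ ^ 2 * (1 + 2 * ((n : ℝ) - 1)) ≤ (ε / 3) ^ 2 := by
    have h := mul_le_of_le_div₀ (by positivity) (Real.sqrt_nonneg _) (div_div ε 3 _ ▸ hδ')
    have h2 := pow_le_pow_left₀ (by positivity) h 2
    rw [mul_pow, Real.sq_sqrt (by positivity)] at h2
    nlinarith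
  have herr := sum_sq_sub_le_of_matNorm_sub_le (fun y => (hM y).1) (fun y => (hM y).2) hq
  have hmem := sum_sq_mem_Icc_of_sum_sq_sub_le (t := ε / 3) (by positivity) (by linarith)
    (herr.trans (by gcongr))
  rw [mul_div_cancel₀ ε three_ne_zero] at hmem
  exact hmem

theorem stmt_13 (n : ℕ) (hn : 1 ≤ n) (A : Matrix (Fin n) (Fin n) ℝ)
    (hAsymm : A.IsSymm) (hAdiag : ∀ i, A i i = 0)
    (hAval : ∀ i j, A i j = -1 ∨ A i j = 0 ∨ A i j = 1)
    (D L : Matrix (Fin n) (Fin n) ℝ)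
    (hD : D = Matrix.diagonal fun i => ∑ j, |A i j|)
    (hL : L = D - A)
    (s : Fin n → ℝ) (hs : ∀ i, s i ∈ Set.Icc (-1 : ℝ) 1) (hs0 : s ≠ 0)
    (ε : ℝ) (hε : 0 < ε) (hε' : ε < 1 / 2)
    (δ : ℝ) (hδ : 0 < δ) (hδ' : δ ≤ ε / (3 * Real.sqrt (2 * n)))
    (q : Fin n → ℝ)
    (hq : matNorm (1 + L) (q - (1 + L)⁻¹ *ᵥ s) ≤
      δ * matNorm (1 + L) ((1 + L)⁻¹ *ᵥ s)) :
    (1 - ε) * ∑ i, (((1 + L)⁻¹ *ᵥ s) i) ^ 2 ≤ ∑ i, q i ^ 2 ∧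
    ∑ i, q i ^ 2 ≤ (1 + ε) * ∑ i, (((1 + L)⁻¹ *ᵥ s) i) ^ 2 :=
  stmt_13_general n A hAsymm hAdiag hAval D L hD hL s ε hε hε' δ hδ hδ' q hq
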